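/- Let C be a Hamiltonian cycle of a graph G on 5 vertices labeled 0,…,4 in cyclic order along C. If the pair (G,C) admits a representation and satisfies (P2), then there exists j ∈ ℤ/5 such that E(G) = E(C) ∪ {{j, j+2}, {j, j+3}} (indices mod 5); in particular G has exactly two chords of C and they share a common endpoint. -/

import Mathlib

/-!
Two non-splitting paths `P ∼ Q` of a tree have a union of maximum degree two, so an edge they
share separates, in the tree, every edge of `P` outside `Q` from every edge of `Q` outside `P`.
Along the Hamiltonian cycle consecutive paths are non-splitting, and chaining these separations
around a cycle of paths whose non-consecutive members are edge-disjoint ends with two edges of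
one connected path lying on different sides of an edge it avoids. For `C₅` this gives a chord,
and shows that a chord `{j, j+2}` forces `{j+2, j+4}` or `{j+3, j}`; so two chords meet at a
vertex, and (P2), which forbids three chords among four consecutive vertices, excludes the rest.
-/

open SimpleGraph

namespace ENPT

variable {β V W U : Type}

/-- A graph on a subset of `β`, modeled as a subgraph of the complete graph on `β`. -/
abbrev SubG (β : Type) := SimpleGraph.Subgraph (⊤ : SimpleGraph β)

/-- `H` is a path: connected, with at least one edge, and maximum degree 2. -/
def IsPathSub (H : SubG β) : Prop :=
  H.Connected ∧ H.edgeSet.Nonempty ∧ ∀ v : β, (H.neighborSet v).ncard ≤ 2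

/-- The split vertices of two subgraphs: vertices of degree at least 3 in their union. -/
def Split (P Q : SubG β) : Set β := {v | 3 ≤ ((P ⊔ Q).neighborSet v).ncard}

/-- Two subgraphs edge-intersect. -/
def EdgeInt (P Q : SubG β) : Prop := (P.edgeSet ∩ Q.edgeSet).Nonempty

lemma EdgeInt.symm {P Q : SubG β} (h : EdgeInt P Q) : EdgeInt Q P := by
  unfold EdgeInt at h ⊢; rwa [Set.inter_comm]

lemma Split_comm (P Q : SubG β) : Split P Q = Split Q P := by
  unfold Split; rw [sup_comm]

/-- `P ∼ Q` : edge-intersecting and non-splitting. -/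
def NonSplit (P Q : SubG β) : Prop := EdgeInt P Q ∧ Split P Q = ∅

lemma NonSplit.symm {P Q : SubG β} (h : NonSplit P Q) : NonSplit Q P :=
  ⟨h.1.symm, by rw [Split_comm]; exact h.2⟩

/-- The EPT graph of a family of paths. -/
def EPTg (Ps : V → SubG β) : SimpleGraph V where
  Adj u v := u ≠ v ∧ EdgeInt (Ps u) (Ps v)
  symm := ⟨fun u v h => ⟨Ne.symm h.1, h.2.symm⟩⟩
  loopless := ⟨fun u h => h.1 rfl⟩

/-- The ENPT graph of a family of paths. -/
def ENPTg (Ps : V → SubG β) : SimpleGraph V where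
  Adj u v := u ≠ v ∧ NonSplit (Ps u) (Ps v)
  symm := ⟨fun u v h => ⟨Ne.symm h.1, h.2.symm⟩⟩
  loopless := ⟨fun u h => h.1 rfl⟩

/-- `⟨T, Ps⟩` is a representation of the pair `(G, G')`. -/
structure IsRep (T : SubG β) (Ps : V → SubG β) (G G' : SimpleGraph V) : Prop where
  tree : T.coe.IsTree
  sub : ∀ v, Ps v ≤ T
  path : ∀ v, IsPathSub (Ps v)
  ept : EPTg Ps = G
  enpt : ENPTg Ps = G'

/-- Property (P3) of a representation: no red edge-clique of size 3. -/
def SatP3 (Ps : V → SubG β) : Prop :=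
  ¬ ∃ (e : Sym2 β) (p q r : V), p ≠ q ∧ p ≠ r ∧ q ≠ r ∧
    e ∈ (Ps p).edgeSet ∧ e ∈ (Ps q).edgeSet ∧ e ∈ (Ps r).edgeSet ∧
    (Split (Ps p) (Ps q)).Nonempty ∧ (Split (Ps p) (Ps r)).Nonempty ∧
    (Split (Ps q) (Ps r)).Nonempty

/-- The map merging `q` into `p`. -/
def mergeMap [DecidableEq V] (p q : V) : V → V := fun x => if x = q then p else x

/-- The image of a subgraph under the merge of `b` into `a` (contraction of `{a,b}`). -/
def cImage [DecidableEq β] (a b : β) (H : SubG β) : SubG β where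
  verts := mergeMap a b '' H.verts
  Adj x y := x ≠ y ∧ ∃ x' y', H.Adj x' y' ∧ x = mergeMap a b x' ∧ y = mergeMap a b y'
  adj_sub := by
    rintro x y ⟨h, -⟩
    exact h
  edge_vert := by
    rintro x y ⟨h, x', y', hadj, rfl, rfl⟩
    exact ⟨x', H.edge_vert hadj, rfl⟩
  symm := by
    refine ⟨?_⟩
    rintro x y ⟨h, x', y', hadj, rfl, rfl⟩
    exact ⟨h.symm, y', x', hadj.symm, rfl, rfl⟩

/-- Delete from `H` the vertex `x` and all edges at `x` (used for tail removal). -/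
def delTail (x : β) (H : SubG β) : SubG β where
  verts := H.verts \ {x}
  Adj u w := H.Adj u w ∧ u ≠ x ∧ w ≠ x
  adj_sub := fun h => H.adj_sub h.1
  edge_vert := by
    rintro u w ⟨h, hu, hw⟩
    exact ⟨H.edge_vert h, by simpa using hu⟩
  symm := by
    refine ⟨?_⟩
    rintro u w ⟨h, hu, hw⟩
    exact ⟨h.symm, hw, hu⟩

/-- A pair `⟨tree, family of paths⟩`. -/
structure Rep (β V : Type) where
  T : SubG β
  P : V → SubG β

/-- Well-formedness: the tree is a tree and each member of the family is a path of it. -/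
def Rep.WF (R : Rep β V) : Prop :=
  R.T.coe.IsTree ∧ (∀ v, R.P v ≤ R.T) ∧ ∀ v, IsPathSub (R.P v)

/-- `R` is a representation of the pair `(G, G')`. -/
def Rep.IsRepOf (R : Rep β V) (G G' : SimpleGraph V) : Prop := IsRep R.T R.P G G'

/-- A single minifying operation: contraction of a tree edge, or removal of a tail of
one of the paths. -/
inductive MinifyStep [DecidableEq β] [DecidableEq V] : Rep β V → Rep β V → Prop
  | contract (R : Rep β V) (a b : β) (hab : R.T.Adj a b)
      (hkeep : ∀ v, (cImage a b (R.P v)).edgeSet.Nonempty) :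
      MinifyStep R ⟨cImage a b R.T, fun v => cImage a b (R.P v)⟩
  | tail (R : Rep β V) (v₀ : V) (x y : β) (hxy : (R.P v₀).Adj x y)
      (hdeg : ((R.P v₀).neighborSet x).ncard = 1)
      (htwo : 2 ≤ (R.P v₀).edgeSet.ncard) :
      MinifyStep R ⟨R.T, Function.update R.P v₀ (delTail x (R.P v₀))⟩

/-- A minimal representation of `(G, G')`: no single minifying operation yields again a
representation of `(G, G')`. -/
def IsMinimalRep [DecidableEq β] [DecidableEq V] (T : SubG β) (Ps : V → SubG β)
    (G G' : SimpleGraph V) : Prop :=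
  IsRep T Ps G G' ∧ ∀ R' : Rep β V, MinifyStep ⟨T, Ps⟩ R' → ¬ R'.IsRepOf G G'

/-- The cycle on `ZMod n`, vertices labeled in cyclic order. -/
def cycleG (n : ℕ) : SimpleGraph (ZMod n) :=
  SimpleGraph.fromRel (fun i j => j = i + 1)

/-- Property (P2) of a pair: no four vertices inducing a `K4` in `G` and a `P4` in `G'`. -/
def NoK4P4 (G G' : SimpleGraph V) : Prop :=
  ¬ ∃ a b c d : V,
    G.Adj a b ∧ G.Adj a c ∧ G.Adj a d ∧ G.Adj b c ∧ G.Adj b d ∧ G.Adj c d ∧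
    G'.Adj a b ∧ G'.Adj b c ∧ G'.Adj c d ∧ ¬G'.Adj a c ∧ ¬G'.Adj a d ∧ ¬G'.Adj b d

/-- The contraction `G/e` of the edge `e = {p,q}`, merging `q` into `p`,
realized on the vertex set `V ∖ {q}`. -/
def contrG [DecidableEq V] (G : SimpleGraph V) (p q : V) : SimpleGraph {x : V // x ≠ q} where
  Adj a b := a ≠ b ∧ ∃ x y : V, G.Adj x y ∧ (a : V) = mergeMap p q x ∧ (b : V) = mergeMap p q y
  symm := by
    refine ⟨?_⟩
    rintro a b ⟨h, x, y, hxy, hx, hy⟩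
    exact ⟨h.symm, y, x, hxy.symm, hy, hx⟩
  loopless := by refine ⟨?_⟩; rintro a ⟨h, -⟩; exact h rfl

/-- The contractibility condition for the edge `{p,q}` in the pair `(G,G')`:
no edge of `G'` sharing exactly one endpoint with `{p,q}` closes a triangle of `G`. -/
def ContractibleCond (G G' : SimpleGraph V) (p q : V) : Prop :=
  ∀ r : V, (G'.Adj p r → r ≠ q → ¬ G.Adj q r) ∧ (G'.Adj q r → r ≠ p → ¬ G.Adj p r)

/-- `{p,q}` is a contractible edge of the pair `(G,G')`. -/
def ContractibleEdge (G G' : SimpleGraph V) (p q : V) : Prop :=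
  G'.Adj p q ∧ ContractibleCond G G' p q

/-- `core` is a path between the two (distinct) endpoints `u` and `v`. -/
def IsPathBetween (core : SubG β) (u v : β) : Prop :=
  IsPathSub core ∧ u ∈ core.verts ∧ v ∈ core.verts ∧
    ∀ w ∈ core.verts, ((core.neighborSet w).ncard = 1 ↔ (w = u ∨ w = v))

/-- Delete a set of edges from a subgraph (keeping the vertices). -/
def delEdgesSub (H : SubG β) (s : Set (Sym2 β)) : SubG β where
  verts := H.verts
  Adj x y := H.Adj x y ∧ s(x, y) ∉ s
  adj_sub := fun h => H.adj_sub h.1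
  edge_vert := fun h => H.edge_vert h.1
  symm := by
    refine ⟨?_⟩
    rintro x y ⟨h, hs⟩
    refine ⟨h.symm, ?_⟩
    rwa [Sym2.eq_swap]

/-- The join of two graphs. -/
def joinG (H : SimpleGraph W) (K : SimpleGraph U) : SimpleGraph (W ⊕ U) where
  Adj x y :=
    match x, y with
    | Sum.inl a, Sum.inl b => H.Adj a b
    | Sum.inr a, Sum.inr b => K.Adj a b
    | Sum.inl _, Sum.inr _ => True
    | Sum.inr _, Sum.inl _ => True
  symm := by
    refine ⟨?_⟩
    rintro (a | a) (b | b) h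
    · exact h.symm
    · trivial
    · trivial
    · exact h.symm
  loopless := by
    refine ⟨?_⟩
    rintro (a | a) h
    · exact H.loopless.irrefl a h
    · exact K.loopless.irrefl a h

/-- The component graph `comp(G,C,K)`: vertices are the connected components of the
subgraph of `G` induced on the complement of `K`, two components being adjacent iff some
vertex of `K` is adjacent in `C` to both of them. -/
def compGraph (G C : SimpleGraph V) (K : Set V) :
    SimpleGraph (SimpleGraph.induce (Kᶜ : Set V) G).ConnectedComponent where
  Adj A B := A ≠ B ∧ ∃ v ∈ K, ∃ a b : (Kᶜ : Set V),
    C.Adj v (a : V) ∧ C.Adj v (b : V) ∧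
    (SimpleGraph.induce (Kᶜ : Set V) G).connectedComponentMk a = A ∧
    (SimpleGraph.induce (Kᶜ : Set V) G).connectedComponentMk b = B
  symm := by
    refine ⟨?_⟩
    rintro A B ⟨h, v, hv, a, b, h1, h2, h3, h4⟩
    exact ⟨h.symm, v, hv, b, a, h2, h1, h4, h3⟩
  loopless := by refine ⟨?_⟩; rintro A ⟨h, -⟩; exact h rfl

/-- The map merging both endpoints of an edge into the smaller one. -/
def minMerge [LinearOrder V] (a b : V) : V → V :=
  fun x => if x = a ∨ x = b then min a b else x

/-- Contraction of the edge `{a,b}` of a graph, the merged vertex being named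
`min a b` (the other endpoint remains as an isolated vertex). -/
def contrMin [LinearOrder V] (G : SimpleGraph V) (a b : V) : SimpleGraph V where
  Adj x y := x ≠ y ∧ ∃ x' y', G.Adj x' y' ∧ x = minMerge a b x' ∧ y = minMerge a b y'
  symm := by
    refine ⟨?_⟩
    rintro x y ⟨h, x', y', hxy, hx, hy⟩
    exact ⟨h.symm, y', x', hxy.symm, hy, hx⟩
  loopless := by refine ⟨?_⟩; rintro x ⟨h, -⟩; exact h rfl

/-- Simultaneous contraction in a pair of graphs. -/
def stepPair [LinearOrder V] (GG : SimpleGraph V × SimpleGraph V) (e : V × V) :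
    SimpleGraph V × SimpleGraph V :=
  (contrMin GG.1 e.1 e.2, contrMin GG.2 e.1 e.2)

/-- Iterated contraction of a list of edges (given by their original names; `f` is the
accumulated merging map). -/
def contractGo [LinearOrder V] (f : V → V) (GG : SimpleGraph V × SimpleGraph V) :
    List (V × V) → SimpleGraph V × SimpleGraph V
  | [] => GG
  | e :: l => contractGo (minMerge (f e.1) (f e.2) ∘ f) (stepPair GG (f e.1, f e.2)) l

/-- The iterated contraction is defined: at each step the image of the next edge is an
edge of the current second graph and is contractible in the current pair. -/
def DefinedGo [LinearOrder V] (f : V → V) (GG : SimpleGraph V × SimpleGraph V) :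
    List (V × V) → Prop
  | [] => True
  | e :: l => (GG.2.Adj (f e.1) (f e.2) ∧ ContractibleCond GG.1 GG.2 (f e.1) (f e.2)) ∧
      DefinedGo (minMerge (f e.1) (f e.2) ∘ f) (stepPair GG (f e.1, f e.2)) l

end ENPT

namespace SimpleGraph.Subgraph

variable {V : Type*} {G : SimpleGraph V} {H : G.Subgraph}

lemma mem_verts_of_mem_support_spanningCoe {u w x : V} (p : H.spanningCoe.Walk u w)
    (hu : u ∈ H.verts) (hx : x ∈ p.support) : x ∈ H.verts := by
  induction p with
  | nil => simp_all
  | cons h p ih =>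
    rw [Walk.support_cons, List.mem_cons] at hx
    exact hx.elim (· ▸ hu) (ih (H.edge_vert h.symm))

lemma mem_edgeSet_of_mem_edges_spanningCoe {u w : V} (p : H.spanningCoe.Walk u w) {e : Sym2 V}
    (he : e ∈ p.edges) : e ∈ H.edgeSet :=
  H.edgeSet_spanningCoe ▸ p.edges_subset_edgeSet he

lemma isAcyclic_spanningCoe (h : H.coe.IsAcyclic) : H.spanningCoe.IsAcyclic := by
  intro v c hc
  have hv : v ∈ H.verts := H.edge_vert (c.adj_snd hc.not_nil)
  let c' := c.induce H.verts fun _ => mem_verts_of_mem_support_spanningCoe c hv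
  have hc' : c'.IsCycle := by
    rwa [← Walk.isCycle_map_iff_of_injective (f := (Embedding.induce H.verts).toHom)
      Subtype.val_injective, Walk.map_induce]
  exact h c' hc'

lemma Connected.reachable_spanningCoe (hH : H.Connected) {a b : V} (ha : a ∈ H.verts)
    (hb : b ∈ H.verts) : H.spanningCoe.Reachable a b :=
  (hH.preconnected ⟨a, ha⟩ ⟨b, hb⟩).map ⟨Subtype.val, id⟩

end SimpleGraph.Subgraph

namespace ENPT

variable {β V : Type} {T X Y : SubG β} {g : Sym2 β}

def SameSide (T : SubG β) (g : Sym2 β) (u v : β) : Prop :=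
  (T.spanningCoe.deleteEdges {g}).Reachable u v

def Separates (T : SubG β) (g e f : Sym2 β) : Prop :=
  ∀ ⦃u v : β⦄, u ∈ e → v ∈ f → ¬ SameSide T g u v

lemma SameSide.symm {u v : β} (h : SameSide T g u v) : SameSide T g v u :=
  Reachable.symm h

lemma SameSide.trans {u v w : β} (h : SameSide T g u v) (h' : SameSide T g v w) :
    SameSide T g u w :=
  Reachable.trans h h'

lemma sameSide_of_walk (hXT : X ≤ T) {u v : β} (p : X.spanningCoe.Walk u v)
    (hg : g ∉ p.edges) : SameSide T g u v := by
  refine ⟨p.transfer _ fun e he => ?_⟩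
  rw [edgeSet_deleteEdges, Subgraph.edgeSet_spanningCoe]
  exact ⟨Subgraph.edgeSet_mono hXT (X.mem_edgeSet_of_mem_edges_spanningCoe p he),
    fun hge => hg (Set.mem_singleton_iff.mp hge ▸ he)⟩

lemma sameSide_of_mem_edge {e : Sym2 β} (he : e ∈ T.edgeSet) (hge : g ≠ e) {x y : β}
    (hx : x ∈ e) (hy : y ∈ e) : SameSide T g x y := by
  induction e using Sym2.ind with
  | _ a b =>
  have hab : (T.spanningCoe.deleteEdges {g}).Adj a b :=
    (deleteEdges_adj ..).mpr ⟨he, fun h => hge (Set.mem_singleton_iff.mp h).symm⟩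
  rcases Sym2.mem_iff.mp hx with rfl | rfl <;> rcases Sym2.mem_iff.mp hy with rfl | rfl
  exacts [Reachable.refl _, hab.reachable, hab.reachable.symm, Reachable.refl _]

lemma sameSide_of_connected (hXT : X ≤ T) (hX : X.Connected) (hg : g ∉ X.edgeSet) {u v : β}
    (hu : u ∈ X.verts) (hv : v ∈ X.verts) : SameSide T g u v := by
  obtain ⟨p⟩ := hX.reachable_spanningCoe hu hv
  exact sameSide_of_walk hXT p fun hp => hg (X.mem_edgeSet_of_mem_edges_spanningCoe p hp)

lemma not_sameSide_of_adj (hT : T.coe.IsAcyclic) {a b : β} (hab : T.Adj a b) :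
    ¬ SameSide T s(a, b) a b :=
  isAcyclic_iff_forall_adj_isBridge.mp (Subgraph.isAcyclic_spanningCoe hT) hab

lemma exists_isPath_to_mem_avoiding (hX : X.Connected) {u : β} (hu : u ∈ X.verts) {f : Sym2 β}
    (hf : f ∈ X.edgeSet) :
    ∃ x ∈ f, ∃ p : X.spanningCoe.Walk u x, p.IsPath ∧ f ∉ p.edges := by
  classical
  induction f using Sym2.ind with
  | _ a b =>
  obtain ⟨p⟩ := hX.reachable_spanningCoe hu (X.edge_vert hf)
  by_cases hb : b ∈ p.bypass.support
  · have hba : b ≠ a := (X.adj_sub hf).ne'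
    refine ⟨b, Sym2.mem_mk_right a b, p.bypass.takeUntil b hb,
      p.bypass_isPath.takeUntil hb, fun hm => ?_⟩
    exact Walk.endpoint_notMem_support_takeUntil p.bypass_isPath hb hba.symm
      (Walk.mem_support_of_mem_edges hm (Sym2.mem_mk_left a b))
  · exact ⟨a, Sym2.mem_mk_left a b, p.bypass, p.bypass_isPath,
      fun hm => hb (Walk.mem_support_of_mem_edges hm (Sym2.mem_mk_right a b))⟩

lemma sameSide_of_not_sameSide (hT : T.Connected) {a b : Sym2 β} (haT : a ∈ T.edgeSet)
    (hab : a ≠ b) {u b₁ a₁ : β} (hu : u ∈ T.verts) (hb₁ : b₁ ∈ b) (ha₁ : a₁ ∈ a)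
    (h : ¬ SameSide T a u b₁) : SameSide T b u a₁ := by
  classical
  obtain ⟨x, hx, p, -, hpa⟩ := exists_isPath_to_mem_avoiding hT hu haT
  by_cases hb : b ∈ p.edges
  · have hb₁p := Walk.mem_support_of_mem_edges hb hb₁
    exact absurd (sameSide_of_walk le_rfl (p.takeUntil b₁ hb₁p)
      fun hm => hpa (p.edges_takeUntil_subset_edges hb₁p hm)) h
  · exact (sameSide_of_walk le_rfl p hb).trans (sameSide_of_mem_edge haT hab.symm hx ha₁)

lemma Separates.trans (hT : T.Connected) {a b x y : Sym2 β} (haT : a ∈ T.edgeSet)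
    (hyT : y ∈ T.edgeSet) (hab : a ≠ b) (h₁ : Separates T a x b) (h₂ : Separates T b a y) :
    Separates T a x y := fun _ _ hu hv huv =>
  h₂ (Sym2.out_fst_mem a) hv <| SameSide.symm <|
    sameSide_of_not_sameSide hT haT hab (T.mem_verts_of_mem_edge hyT hv) (Sym2.out_fst_mem b)
      (Sym2.out_fst_mem a) fun hvb => h₁ hu (Sym2.out_fst_mem b) (huv.trans hvb)

lemma Separates.mem_edgeSet_of_connected {e f : Sym2 β} (h : Separates T g e f) (hXT : X ≤ T)
    (hX : X.Connected) (he : e ∈ X.edgeSet) (hf : f ∈ X.edgeSet) : g ∈ X.edgeSet := by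
  by_contra hg
  exact h (Sym2.out_fst_mem e) (Sym2.out_fst_mem f) (sameSide_of_connected hXT hX hg
    (X.mem_verts_of_mem_edge he (Sym2.out_fst_mem e))
    (X.mem_verts_of_mem_edge hf (Sym2.out_fst_mem f)))

lemma false_of_three_edges [Finite β] (hs : Split X Y = ∅) {x : β} {m₁ m₂ m₃ : Sym2 β}
    (h₁ : m₁ ∈ X.edgeSet ∪ Y.edgeSet) (h₂ : m₂ ∈ X.edgeSet ∪ Y.edgeSet)
    (h₃ : m₃ ∈ X.edgeSet ∪ Y.edgeSet) (hx₁ : x ∈ m₁) (hx₂ : x ∈ m₂) (hx₃ : x ∈ m₃)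
    (h₁₂ : m₁ ≠ m₂) (h₁₃ : m₁ ≠ m₃) (h₂₃ : m₂ ≠ m₃) : False := by
  rw [← Subgraph.edgeSet_sup] at h₁ h₂ h₃
  obtain ⟨y₁, rfl⟩ := Sym2.mem_iff_exists.mp hx₁
  obtain ⟨y₂, rfl⟩ := Sym2.mem_iff_exists.mp hx₂
  obtain ⟨y₃, rfl⟩ := Sym2.mem_iff_exists.mp hx₃
  have hx : x ∈ Split X Y := Nat.succ_le_of_lt <| (Set.two_lt_ncard_iff).mpr ⟨y₁, y₂, y₃,
    h₁, h₂, h₃, fun h => h₁₂ (h ▸ rfl), fun h => h₁₃ (h ▸ rfl), fun h => h₂₃ (h ▸ rfl)⟩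
  exact hs.subset hx

lemma false_of_paths_from_common_edge [Finite β] (hs : Split X Y = ∅) {e h : Sym2 β}
    (heX : e ∈ X.edgeSet) (heY : e ∉ Y.edgeSet) (hhY : h ∈ Y.edgeSet) (hhX : h ∉ X.edgeSet)
    {x u w : β} (p : X.spanningCoe.Walk x u) (hp : p.IsPath) (q : Y.spanningCoe.Walk x w)
    (hq : q.IsPath) {f : Sym2 β} (hfX : f ∈ X.edgeSet) (hfY : f ∈ Y.edgeSet) (hxf : x ∈ f)
    (hpf : f ∉ p.edges) (hqf : f ∉ q.edges) (hue : u ∈ e) (hwh : w ∈ h) : False := by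
  have mem_X {a b : β} (p : X.spanningCoe.Walk a b) {m : Sym2 β} (hm : m ∈ p.edges) :
      m ∈ X.edgeSet := X.mem_edgeSet_of_mem_edges_spanningCoe p hm
  have mem_Y {a b : β} (q : Y.spanningCoe.Walk a b) {m : Sym2 β} (hm : m ∈ q.edges) :
      m ∈ Y.edgeSet := Y.mem_edgeSet_of_mem_edges_spanningCoe q hm
  -- While `p` and `q` run along the same edge, that edge is common to `X` and `Y`; where they
  -- part, or where one of them ends, the current vertex has three edges in `X ∪ Y`.
  induction p generalizing f with
  | @nil y =>
    cases q with
    | nil =>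
      exact false_of_three_edges hs (.inl heX) (.inl hfX) (.inr hhY) hue hxf hwh
        (fun h' => heY (h' ▸ hfY)) (fun h' => hhX (h' ▸ heX)) (fun h' => hhX (h' ▸ hfX))
    | @cons _ z _ hyz q =>
      have hq₁ : s(y, z) ∈ (Walk.cons hyz q).edges := List.mem_cons_self
      exact false_of_three_edges hs (.inl heX) (.inl hfX) (.inr (mem_Y _ hq₁)) hue hxf
        (Sym2.mem_mk_left _ _) (fun h' => heY (h' ▸ hfY)) (fun h' => heY (h' ▸ mem_Y _ hq₁))
        (fun h' => hqf (h' ▸ hq₁))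
  | @cons x z u hxz p ih =>
    have hp₁ : s(x, z) ∈ (Walk.cons hxz p).edges := List.mem_cons_self
    obtain ⟨hp', hxp⟩ := (Walk.cons_isPath_iff hxz p).mp hp
    cases q with
    | nil =>
      exact false_of_three_edges hs (.inr hhY) (.inl hfX) (.inl (mem_X _ hp₁)) hwh hxf
        (Sym2.mem_mk_left _ _) (fun h' => hhX (h' ▸ hfX)) (fun h' => hhX (h' ▸ mem_X _ hp₁))
        (fun h' => hpf (h' ▸ hp₁))
    | @cons _ z' _ hxz' q =>
      have hq₁ : s(x, z') ∈ (Walk.cons hxz' q).edges := List.mem_cons_self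
      obtain ⟨hq', hxq⟩ := (Walk.cons_isPath_iff hxz' q).mp hq
      by_cases hzz : z = z'
      · subst hzz
        exact ih hp' q hq' (mem_X _ hp₁) (mem_Y _ hq₁) (Sym2.mem_mk_right x z)
          (fun hm => hxp (Walk.mem_support_of_mem_edges hm (Sym2.mem_mk_left x z)))
          (fun hm => hxq (Walk.mem_support_of_mem_edges hm (Sym2.mem_mk_left x z))) hue
      · exact false_of_three_edges hs (.inl hfX) (.inl (mem_X _ hp₁)) (.inr (mem_Y _ hq₁)) hxf
          (Sym2.mem_mk_left x z) (Sym2.mem_mk_left x z') (fun h' => hpf (h' ▸ hp₁))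
          (fun h' => hqf (h' ▸ hq₁)) (fun h' => hzz (Sym2.congr_right.mp h'))

lemma separates_of_split_eq_empty [Finite β] (hT : T.coe.IsAcyclic) (hXT : X ≤ T) (hYT : Y ≤ T)
    (hX : X.Connected) (hY : Y.Connected) (hs : Split X Y = ∅) {e f h : Sym2 β}
    (heX : e ∈ X.edgeSet) (heY : e ∉ Y.edgeSet) (hhY : h ∈ Y.edgeSet) (hhX : h ∉ X.edgeSet)
    (hfX : f ∈ X.edgeSet) (hfY : f ∈ Y.edgeSet) : Separates T f e h := by
  intro u w hue hwh huw
  obtain ⟨x, hxf, p, hp, hpf⟩ :=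
    exists_isPath_to_mem_avoiding hX (X.mem_verts_of_mem_edge heX hue) hfX
  obtain ⟨y, hyf, q, hq, hqf⟩ :=
    exists_isPath_to_mem_avoiding hY (Y.mem_verts_of_mem_edge hhY hwh) hfY
  by_cases hxy : x = y
  · subst hxy
    exact false_of_paths_from_common_edge hs heX heY hhY hhX p.reverse hp.reverse q.reverse
      hq.reverse hfX hfY hxf (by simpa using hpf) (by simpa using hqf) hue hwh
  · have hxy' : SameSide T f x y :=
      ((sameSide_of_walk hXT p hpf).symm.trans huw).trans (sameSide_of_walk hYT q hqf)
    obtain rfl := (Sym2.mem_and_mem_iff hxy).mp ⟨hxf, hyf⟩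
    exact not_sameSide_of_adj hT (Subgraph.edgeSet_mono hXT hfX) hxy'

section Family

variable [Finite β] {Ps : V → SubG β}

lemma separates_of_nonsplit_chain (hT : T.coe.IsTree) (hsub : ∀ v, Ps v ≤ T)
    (hconn : ∀ v, (Ps v).Connected) {a b c : V} (hab : Split (Ps a) (Ps b) = ∅)
    (hbc : Split (Ps b) (Ps c) = ∅) (hac : ¬ EdgeInt (Ps a) (Ps c)) {x o₁ o₂ y : Sym2 β}
    (hxa : x ∈ (Ps a).edgeSet) (hxb : x ∉ (Ps b).edgeSet) (ho₁a : o₁ ∈ (Ps a).edgeSet)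
    (ho₁b : o₁ ∈ (Ps b).edgeSet) (ho₂b : o₂ ∈ (Ps b).edgeSet) (ho₂c : o₂ ∈ (Ps c).edgeSet)
    (hyc : y ∈ (Ps c).edgeSet) (hyb : y ∉ (Ps b).edgeSet) : Separates T o₁ x y := by
  have h₁ : Separates T o₁ x o₂ :=
    separates_of_split_eq_empty hT.isAcyclic (hsub a) (hsub b) (hconn a) (hconn b) hab hxa hxb
      ho₂b (fun h => hac ⟨o₂, h, ho₂c⟩) ho₁a ho₁b
  have h₂ : Separates T o₂ o₁ y :=
    separates_of_split_eq_empty hT.isAcyclic (hsub b) (hsub c) (hconn b) (hconn c) hbc ho₁b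
      (fun h => hac ⟨o₁, ho₁a, h⟩) hyc hyb ho₂b ho₂c
  have ho₁₂ : o₁ ≠ o₂ := fun h => hac ⟨o₁, ho₁a, h ▸ ho₂c⟩
  exact h₁.trans ⟨hT.connected⟩ (Subgraph.edgeSet_mono (hsub a) ho₁a)
    (Subgraph.edgeSet_mono (hsub c) hyc) ho₁₂ h₂

lemma false_of_four_cycle (hT : T.coe.IsTree) (hsub : ∀ v, Ps v ≤ T)
    (hconn : ∀ v, (Ps v).Connected) {a b c d : V} (hab : EdgeInt (Ps a) (Ps b))
    (hbc : NonSplit (Ps b) (Ps c)) (hcd : NonSplit (Ps c) (Ps d)) (hda : EdgeInt (Ps d) (Ps a))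
    (hbd : ¬ EdgeInt (Ps b) (Ps d)) (hca : ¬ EdgeInt (Ps c) (Ps a)) : False := by
  obtain ⟨o₀, ho₀a, ho₀b⟩ := hab
  obtain ⟨o₁, ho₁b, ho₁c⟩ := hbc.1
  obtain ⟨o₂, ho₂c, ho₂d⟩ := hcd.1
  obtain ⟨o₃, ho₃d, ho₃a⟩ := hda
  have hsep : Separates T o₁ o₀ o₃ :=
    separates_of_nonsplit_chain hT hsub hconn hbc.2 hcd.2 hbd ho₀b (fun h => hca ⟨o₀, h, ho₀a⟩)
      ho₁b ho₁c ho₂c ho₂d ho₃d (fun h => hca ⟨o₃, h, ho₃a⟩)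
  exact hca ⟨o₁, ho₁c, hsep.mem_edgeSet_of_connected (hsub a) (hconn a) ho₀a ho₃a⟩

lemma false_of_five_cycle (hT : T.coe.IsTree) (hsub : ∀ v, Ps v ≤ T)
    (hconn : ∀ v, (Ps v).Connected) {a b c d e : V} (hab : EdgeInt (Ps a) (Ps b))
    (hbc : NonSplit (Ps b) (Ps c)) (hcd : NonSplit (Ps c) (Ps d)) (hde : NonSplit (Ps d) (Ps e))
    (hea : EdgeInt (Ps e) (Ps a)) (hac : ¬ EdgeInt (Ps a) (Ps c))
    (hbd : ¬ EdgeInt (Ps b) (Ps d)) (hce : ¬ EdgeInt (Ps c) (Ps e))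
    (hda : ¬ EdgeInt (Ps d) (Ps a)) : False := by
  obtain ⟨o₀, ho₀a, ho₀b⟩ := hab
  obtain ⟨o₁, ho₁b, ho₁c⟩ := hbc.1
  obtain ⟨o₂, ho₂c, ho₂d⟩ := hcd.1
  obtain ⟨o₃, ho₃d, ho₃e⟩ := hde.1
  obtain ⟨o₄, ho₄e, ho₄a⟩ := hea
  have h₁ : Separates T o₁ o₀ o₂ :=
    separates_of_split_eq_empty hT.isAcyclic (hsub b) (hsub c) (hconn b) (hconn c) hbc.2 ho₀b
      (fun h => hac ⟨o₀, ho₀a, h⟩) ho₂c (fun h => hbd ⟨o₂, h, ho₂d⟩) ho₁b ho₁c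
  have h₂ : Separates T o₂ o₁ o₄ :=
    separates_of_nonsplit_chain hT hsub hconn hcd.2 hde.2 hce ho₁c (fun h => hbd ⟨o₁, ho₁b, h⟩)
      ho₂c ho₂d ho₃d ho₃e ho₄e (fun h => hda ⟨o₄, h, ho₄a⟩)
  have ho₁₂ : o₁ ≠ o₂ := fun h => hbd ⟨o₁, ho₁b, h ▸ ho₂d⟩
  have hsep : Separates T o₁ o₀ o₄ :=
    h₁.trans ⟨hT.connected⟩ (Subgraph.edgeSet_mono (hsub b) ho₁b)
      (Subgraph.edgeSet_mono (hsub e) ho₄e) ho₁₂ h₂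
  exact hac ⟨o₁, hsep.mem_edgeSet_of_connected (hsub a) (hconn a) ho₀a ho₄a, ho₁c⟩

end Family

lemma IsRep.adj_iff {G G' : SimpleGraph V} {Ps : V → SubG β} (hR : IsRep T Ps G G') {u v : V} :
    G.Adj u v ↔ u ≠ v ∧ EdgeInt (Ps u) (Ps v) := by
  rw [← hR.ept]; rfl

lemma IsRep.nonSplit_of_adj {G G' : SimpleGraph V} {Ps : V → SubG β} (hR : IsRep T Ps G G')
    {u v : V} (h : G'.Adj u v) : NonSplit (Ps u) (Ps v) := by
  rw [← hR.enpt] at h; exact h.2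

instance (n : ℕ) : DecidableRel (cycleG n).Adj := fun _ _ =>
  decidable_of_iff _ (fromRel_adj _ _ _).symm

lemma cycleG_five_adj_of_eq_add_one {x y : ZMod 5} (h : y = x + 1) : (cycleG 5).Adj x y := by
  subst h; revert x; decide

section CycleFive

variable [Finite β] {G : SimpleGraph (ZMod 5)} {Ps : ZMod 5 → SubG β}

lemma exists_chord (hR : IsRep T Ps G (cycleG 5)) : ∃ i, G.Adj i (i + 2) := by
  by_contra! h
  have hE (x : ZMod 5) : ¬ EdgeInt (Ps x) (Ps (x + 2)) := fun hx =>
    h x (hR.adj_iff.mpr ⟨by grind, hx⟩)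
  have hN (x : ZMod 5) : NonSplit (Ps x) (Ps (x + 1)) :=
    hR.nonSplit_of_adj (cycleG_five_adj_of_eq_add_one rfl)
  exact false_of_five_cycle hR.tree hR.sub (fun v => (hR.path v).1) (a := 0) (b := 1) (c := 2)
    (d := 3) (e := 4) (hN 0).1 (hN 1) (hN 2) (hN 3) (hN 4).1 (hE 0) (hE 1) (hE 2) (hE 3)

lemma chord_propagates (hR : IsRep T Ps G (cycleG 5)) {j : ZMod 5} (hj : G.Adj j (j + 2)) :
    G.Adj (j + 2) (j + 2 + 2) ∨ G.Adj (j + 3) (j + 3 + 2) := by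
  by_contra! h
  obtain ⟨h₂, h₃⟩ := h
  rw [show j + 3 + 2 = j by grind] at h₃
  exact false_of_four_cycle hR.tree hR.sub (fun v => (hR.path v).1) (a := j) (b := j + 2)
    (c := j + 3) (d := j + 2 + 2) (hR.adj_iff.mp hj).2
    (hR.nonSplit_of_adj (cycleG_five_adj_of_eq_add_one (by ring)))
    (hR.nonSplit_of_adj (cycleG_five_adj_of_eq_add_one (by ring)))
    (hR.nonSplit_of_adj (cycleG_five_adj_of_eq_add_one (by grind))).1
    (fun hx => h₂ (hR.adj_iff.mpr ⟨by grind, hx⟩)) (fun hx => h₃ (hR.adj_iff.mpr ⟨by grind, hx⟩))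

end CycleFive

lemma not_three_chords {G : SimpleGraph (ZMod 5)} (hC : cycleG 5 ≤ G)
    (hP2 : NoK4P4 G (cycleG 5)) (k : ZMod 5) :
    ¬ (G.Adj k (k + 2) ∧ G.Adj (k + 1) (k + 1 + 2) ∧ G.Adj (k + 3) (k + 3 + 2)) := by
  rintro ⟨h₀, h₁, h₃⟩
  rw [show k + 1 + 2 = k + 3 by ring] at h₁
  rw [show k + 3 + 2 = k by grind] at h₃
  have hC₅ : ∀ k : ZMod 5, (cycleG 5).Adj k (k + 1) ∧ (cycleG 5).Adj (k + 1) (k + 2) ∧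
      (cycleG 5).Adj (k + 2) (k + 3) ∧ ¬ (cycleG 5).Adj k (k + 2) ∧
      ¬ (cycleG 5).Adj k (k + 3) ∧ ¬ (cycleG 5).Adj (k + 1) (k + 3) := by
    decide
  obtain ⟨c₀₁, c₁₂, c₂₃, n₀₂, n₀₃, n₁₃⟩ := hC₅ k
  exact hP2 ⟨k, k + 1, k + 2, k + 3, hC c₀₁, h₀, h₃.symm, hC c₁₂, h₁, hC c₂₃, c₀₁, c₁₂, c₂₃,
    n₀₂, n₀₃, n₁₃⟩

lemma exists_forall_iff_eq_or_eq_add_two {c : ZMod 5 → Prop} (hex : ∃ i, c i)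
    (hprop : ∀ j, c j → c (j + 2) ∨ c (j + 3)) (hthree : ∀ k, ¬ (c k ∧ c (k + 1) ∧ c (k + 3))) :
    ∃ i, ∀ x, c x ↔ x = i ∨ x = i + 2 := by
  obtain ⟨i, hi, hi₂⟩ : ∃ i, c i ∧ c (i + 2) := by
    obtain ⟨j, hj⟩ := hex
    rcases hprop j hj with h | h
    · exact ⟨j, hj, h⟩
    · exact ⟨j + 3, h, by rwa [show j + 3 + 2 = j by grind]⟩
  have hi₃ : ¬ c (i + 3) := fun h => hthree (i + 2) ⟨hi₂, by rwa [show i + 2 + 1 = i + 3 by ring],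
    by rwa [show i + 2 + 3 = i by grind]⟩
  have hi₄ : ¬ c (i + 4) := fun h => hthree (i + 4) ⟨h, by rwa [show i + 4 + 1 = i by grind],
    by rwa [show i + 4 + 3 = i + 2 by grind]⟩
  have hi₁ : ¬ c (i + 1) := fun h => (hprop _ h).elim
    (fun h' => hi₃ (by rwa [show i + 1 + 2 = i + 3 by ring] at h'))
    (fun h' => hi₄ (by rwa [show i + 1 + 3 = i + 4 by ring] at h'))
  refine ⟨i, fun x => ⟨fun hx => ?_, by rintro (rfl | rfl) <;> assumption⟩⟩
  have hx' : x = i ∨ x = i + 1 ∨ x = i + 2 ∨ x = i + 3 ∨ x = i + 4 :=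
    (by decide : ∀ x i : ZMod 5, x = i ∨ x = i + 1 ∨ x = i + 2 ∨ x = i + 3 ∨ x = i + 4) x i
  rcases hx' with rfl | rfl | rfl | rfl | rfl
  exacts [.inl rfl, (hi₁ hx).elim, .inr rfl, (hi₃ hx).elim, (hi₄ hx).elim]

lemma adj_iff_cycleG_or_chord {G : SimpleGraph (ZMod 5)} (hC : cycleG 5 ≤ G) (x y : ZMod 5) :
    G.Adj x y ↔ (cycleG 5).Adj x y ∨ (y = x + 2 ∧ G.Adj x (x + 2)) ∨
      (x = y + 2 ∧ G.Adj y (y + 2)) := by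
  refine ⟨fun h => ?_, ?_⟩
  · rcases (by decide : ∀ x y : ZMod 5, x = y ∨ (cycleG 5).Adj x y ∨ y = x + 2 ∨ x = y + 2) x y
      with rfl | hxy | rfl | rfl
    exacts [(G.loopless.irrefl x h).elim, .inl hxy, .inr (.inl ⟨rfl, h⟩),
      .inr (.inr ⟨rfl, h.symm⟩)]
  · rintro (h | ⟨rfl, h⟩ | ⟨rfl, h⟩)
    exacts [hC h, h, h.symm]

/-- a representable pair `(G, C₅)` satisfying (P2) has exactly two chords,
sharing a common endpoint: `E(G) = E(C) ∪ {{j,j+2},{j,j+3}}` for some `j`. -/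
theorem stmt7 (G : SimpleGraph (ZMod 5)) (hC : cycleG 5 ≤ G)
    (hrep : ∃ (β : Type) (_ : Fintype β) (T : SubG β) (Ps : ZMod 5 → SubG β),
        IsRep T Ps G (cycleG 5))
    (hP2 : NoK4P4 G (cycleG 5)) :
    ∃ j : ZMod 5, ∀ x y : ZMod 5,
      G.Adj x y ↔ ((cycleG 5).Adj x y ∨ s(x, y) = s(j, j + 2) ∨ s(x, y) = s(j, j + 3)) := by
  obtain ⟨β, _, T, Ps, hR⟩ := hrep
  obtain ⟨i, hi⟩ := exists_forall_iff_eq_or_eq_add_two (exists_chord hR)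
    (fun _ => chord_propagates hR) (not_three_chords hC hP2)
  refine ⟨i + 2, fun x y => ?_⟩
  rw [adj_iff_cycleG_or_chord hC, hi, hi]
  clear hi
  revert i x y
  decide

end ENPT
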